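/- arXiv:1411.7009 — 5 statements merged into one kernel-verified Lean document; each statement's English description precedes it below -/
import Mathlib

section
/- Detailed balance for the paired-move reversible neighborhood sampler (PRNS, Lemma 1). Assume w_A(d) > 0 whenever d < p, w_R(d) > 0 whenever d > 0, and w_S(d) > 0 whenever 0 < d < p. For distinct inclusion vectors γ, γ' define T(γ, γ') = w_A(|γ|)·1[γ' ∈ N_A(γ)]·(π(γ') / Σ_{γ̃∈N_A(γ)} π(γ̃))·min{1, (w_R(|γ'|)·Σ_{γ̃∈N_A(γ)} π(γ̃)) / (w_A(|γ|)·Σ_{γ̃∈N_R(γ')} π(γ̃))} + w_R(|γ|)·1[γ' ∈ N_R(γ)]·(π(γ') / Σ_{γ̃∈N_R(γ)} π(γ̃))·min{1, (w_A(|γ'|)·Σ_{γ̃∈N_R(γ)} π(γ̃)) / (w_R(|γ|)·Σ_{γ̃∈N_A(γ')} π(γ̃))} + w_S(|γ|)·1[γ' ∈ N_S(γ)]·(π(γ') / Σ_{γ̃∈N_S(γ)} π(γ̃))·min{1, (w_S(|γ'|)·Σ_{γ̃∈N_S(γ)} π(γ̃)) / (w_S(|γ|)·Σ_{γ̃∈N_S(γ')}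 π(γ̃))}. Then π(γ)·T(γ, γ') = π(γ')·T(γ', γ) for all distinct inclusion vectors γ, γ'. -/
open Finset

variable {p : ℕ}

/-- Add neighbors: `N_A(γ) = {γ ∪ {j} : j ∉ γ}`. -/
def NA (γ : Finset (Fin p)) : Finset (Finset (Fin p)) :=
  γᶜ.image (fun j => insert j γ)

/-- Remove neighbors: `N_R(γ) = {γ \ {j} : j ∈ γ}`. -/
def NR (γ : Finset (Fin p)) : Finset (Finset (Fin p)) :=
  γ.image (fun j => γ.erase j)

/-- Swap neighbors: `N_S(γ) = {(γ \ {j}) ∪ {k} : j ∈ γ, k ∉ γ}`. -/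
def NS (γ : Finset (Fin p)) : Finset (Finset (Fin p)) :=
  (γ ×ˢ γᶜ).image (fun jk => insert jk.2 (γ.erase jk.1))

/-- The PRNS transition kernel (for distinct `γ, γ'`). -/
noncomputable def prnsT (π : Finset (Fin p) → ℝ) (wA wR wS : ℕ → ℝ)
    (γ γ' : Finset (Fin p)) : ℝ :=
  wA γ.card * (if γ' ∈ NA γ then (1 : ℝ) else 0) * (π γ' / ∑ g ∈ NA γ, π g) *
      min 1 ((wR γ'.card * ∑ g ∈ NA γ, π g) / (wA γ.card * ∑ g ∈ NR γ', π g))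
    + wR γ.card * (if γ' ∈ NR γ then (1 : ℝ) else 0) * (π γ' / ∑ g ∈ NR γ, π g) *
      min 1 ((wA γ'.card * ∑ g ∈ NR γ, π g) / (wR γ.card * ∑ g ∈ NA γ', π g))
    + wS γ.card * (if γ' ∈ NS γ then (1 : ℝ) else 0) * (π γ' / ∑ g ∈ NS γ, π g) *
      min 1 ((wS γ'.card * ∑ g ∈ NS γ, π g) / (wS γ.card * ∑ g ∈ NS γ', π g))

lemma mem_NA' {γ γ' : Finset (Fin p)} : γ' ∈ NA γ ↔ ∃ j, j ∉ γ ∧ γ' = insert j γ := by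
  simp [NA, eq_comm]

lemma mem_NR' {γ γ' : Finset (Fin p)} : γ' ∈ NR γ ↔ ∃ j, j ∈ γ ∧ γ' = γ.erase j := by
  simp [NR, eq_comm]

lemma mem_NS' {γ γ' : Finset (Fin p)} :
    γ' ∈ NS γ ↔ ∃ j k, j ∈ γ ∧ k ∉ γ ∧ γ' = insert k (γ.erase j) := by
  constructor
  · intro h
    simp only [NS, mem_image, mem_product, mem_compl] at h
    obtain ⟨⟨j, k⟩, ⟨hj, hk⟩, h⟩ := h
    exact ⟨j, k, hj, hk, h.symm⟩
  · rintro ⟨j, k, hj, hk, rfl⟩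
    simp only [NS, mem_image, mem_product, mem_compl]
    exact ⟨⟨j, k⟩, ⟨hj, hk⟩, rfl⟩

lemma card_NA' {γ γ' : Finset (Fin p)} (h : γ' ∈ NA γ) : γ'.card = γ.card + 1 := by
  obtain ⟨j, hj, rfl⟩ := mem_NA'.mp h
  rw [card_insert_of_notMem hj]

lemma card_NR' {γ γ' : Finset (Fin p)} (h : γ' ∈ NR γ) : γ'.card + 1 = γ.card := by
  obtain ⟨j, hj, rfl⟩ := mem_NR'.mp h
  have := card_pos.mpr ⟨j, hj⟩
  rw [card_erase_of_mem hj]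
  omega

lemma card_NS' {γ γ' : Finset (Fin p)} (h : γ' ∈ NS γ) : γ'.card = γ.card := by
  obtain ⟨j, k, hj, hk, rfl⟩ := mem_NS'.mp h
  have hk' : k ∉ γ.erase j := fun h => hk (mem_of_mem_erase h)
  have := card_pos.mpr ⟨j, hj⟩
  rw [card_insert_of_notMem hk', card_erase_of_mem hj]
  omega

lemma NA_NR {γ γ' : Finset (Fin p)} (h : γ' ∈ NA γ) : γ ∈ NR γ' := by
  obtain ⟨j, hj, rfl⟩ := mem_NA'.mp h
  exact mem_NR'.mpr ⟨j, mem_insert_self j γ, (erase_insert hj).symm⟩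

lemma NR_NA {γ γ' : Finset (Fin p)} (h : γ' ∈ NR γ) : γ ∈ NA γ' := by
  obtain ⟨j, hj, rfl⟩ := mem_NR'.mp h
  exact mem_NA'.mpr ⟨j, notMem_erase j γ, (insert_erase hj).symm⟩

lemma NS_symm {γ γ' : Finset (Fin p)} (h : γ' ∈ NS γ) : γ ∈ NS γ' := by
  obtain ⟨j, k, hj, hk, rfl⟩ := mem_NS'.mp h
  have hjk : j ≠ k := fun e => hk (e ▸ hj)
  refine mem_NS'.mpr ⟨k, j, mem_insert_self _ _, ?_, ?_⟩
  · simp [hjk, notMem_erase]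
  · rw [erase_insert (fun h => hk (mem_of_mem_erase h)), insert_erase hj]

lemma card_lt_of_notMem {γ : Finset (Fin p)} {k : Fin p} (hk : k ∉ γ) : γ.card < p := by
  have h1 : γ.card < (insert k γ).card := by
    rw [card_insert_of_notMem hk]; omega
  have h2 : (insert k γ).card ≤ p := by
    simpa using card_le_univ (insert k γ)
  omega

lemma mh_min (a b x y c : ℝ) (ha : 0 < a) (hb : 0 < b) (hx : 0 < x) (hy : 0 < y) :
    a * (c / x) * min 1 ((b * x) / (a * y)) = b * (c / y) * min 1 ((a * y) / (b * x)) := by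
  have key : ∀ u v : ℝ, 0 < u → u * min 1 (v / u) = min u v := by
    intro u v hu
    rw [mul_min_of_nonneg _ _ hu.le, mul_one, mul_div_cancel₀ _ hu.ne']
  have e1 : (b * x) / (a * y) = (b / y) / (a / x) := by
    field_simp
  have e2 : (a * y) / (b * x) = (a / x) / (b / y) := by
    field_simp
  have l : a * (c / x) * min 1 ((b * x) / (a * y)) = c * min (a / x) (b / y) := by
    rw [e1, ← key (a / x) (b / y) (by positivity)]; ring
  have r : b * (c / y) * min 1 ((a * y) / (b * x)) = c * min (b / y) (a / x) := by
    rw [e2, ← key (b / y) (a / x) (by positivity)]; ring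
  rw [l, r, min_comm]

lemma prns_db_NA (π : Finset (Fin p) → ℝ) (hπ : ∀ γ, 0 < π γ)
    (wA wR wS : ℕ → ℝ)
    (hwA : ∀ d, d < p → 0 < wA d)
    (hwR : ∀ d, 0 < d → 0 < wR d)
    (γ γ' : Finset (Fin p)) (h1 : γ' ∈ NA γ) :
    π γ * prnsT π wA wR wS γ γ' = π γ' * prnsT π wA wR wS γ' γ := by
  have hRA : γ ∈ NR γ' := NA_NR h1
  have hc : γ'.card = γ.card + 1 := card_NA' h1
  have h2 : γ' ∉ NR γ := fun h => by have := card_NR' h; omega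
  have h3 : γ' ∉ NS γ := fun h => by have := card_NS' h; omega
  have h1' : γ ∉ NA γ' := fun h => by have := card_NA' h; omega
  have h3' : γ ∉ NS γ' := fun h => by have := card_NS' h; omega
  have hcp : γ.card < p := by
    have := card_le_univ γ'
    simp only [card_univ, Fintype.card_fin] at this
    omega
  have hA : 0 < wA γ.card := hwA _ hcp
  have hB : 0 < wR γ'.card := hwR _ (by omega)
  have hSA : 0 < ∑ g ∈ NA γ, π g := sum_pos (fun g _ => hπ g) ⟨γ', h1⟩
  have hSR : 0 < ∑ g ∈ NR γ', π g := sum_pos (fun g _ => hπ g) ⟨γ, hRA⟩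
  unfold prnsT
  rw [if_pos h1, if_neg h2, if_neg h3, if_neg h1', if_pos hRA, if_neg h3']
  simp only [mul_zero, zero_mul, mul_one, add_zero, zero_add]
  have key := mh_min (wA γ.card) (wR γ'.card) (∑ g ∈ NA γ, π g) (∑ g ∈ NR γ', π g)
    (π γ * π γ') hA hB hSA hSR
  calc π γ * (wA γ.card * (π γ' / ∑ g ∈ NA γ, π g) *
        min 1 ((wR γ'.card * ∑ g ∈ NA γ, π g) / (wA γ.card * ∑ g ∈ NR γ', π g)))
      = wA γ.card * ((π γ * π γ') / ∑ g ∈ NA γ, π g) *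
        min 1 ((wR γ'.card * ∑ g ∈ NA γ, π g) / (wA γ.card * ∑ g ∈ NR γ', π g)) := by ring
    _ = wR γ'.card * ((π γ * π γ') / ∑ g ∈ NR γ', π g) *
        min 1 ((wA γ.card * ∑ g ∈ NR γ', π g) / (wR γ'.card * ∑ g ∈ NA γ, π g)) := key
    _ = π γ' * (wR γ'.card * (π γ / ∑ g ∈ NR γ', π g) *
        min 1 ((wA γ.card * ∑ g ∈ NR γ', π g) / (wR γ'.card * ∑ g ∈ NA γ, π g))) := by ring

/-- Detailed balance for the paired-move reversible neighborhood sampler (Lemma 1). -/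
theorem prns_detailed_balance (π : Finset (Fin p) → ℝ) (hπ : ∀ γ, 0 < π γ)
    (wA wR wS : ℕ → ℝ)
    (hwA0 : ∀ d, 0 ≤ wA d) (hwR0 : ∀ d, 0 ≤ wR d) (hwS0 : ∀ d, 0 ≤ wS d)
    (hwA : ∀ d, d < p → 0 < wA d)
    (hwR : ∀ d, 0 < d → 0 < wR d)
    (hwS : ∀ d, 0 < d → d < p → 0 < wS d)
    (γ γ' : Finset (Fin p)) (hne : γ ≠ γ') :
    π γ * prnsT π wA wR wS γ γ' = π γ' * prnsT π wA wR wS γ' γ := by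
  by_cases h1 : γ' ∈ NA γ
  · exact prns_db_NA π hπ wA wR wS hwA hwR γ γ' h1
  by_cases h2 : γ' ∈ NR γ
  · exact (prns_db_NA π hπ wA wR wS hwA hwR γ' γ (NR_NA h2)).symm
  by_cases h3 : γ' ∈ NS γ
  · -- swap case
    have hSS : γ ∈ NS γ' := NS_symm h3
    have hc : γ'.card = γ.card := card_NS' h3
    obtain ⟨j, k, hj, hk, hγ'⟩ := mem_NS'.mp h3
    have h1' : γ ∉ NA γ' := fun h => by
      have hcc := card_NA' h
      have hcc2 := card_NA' (NR_NA (NA_NR h)); omega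
    have h2' : γ ∉ NR γ' := fun h => by have := card_NR' h; omega
    have h1'' : γ' ∉ NA γ := h1
    have h2'' : γ' ∉ NR γ := h2
    have hpos : 0 < γ.card := card_pos.mpr ⟨j, hj⟩
    have hcp : γ.card < p := card_lt_of_notMem hk
    have hA : 0 < wS γ.card := hwS _ hpos hcp
    have hB : 0 < wS γ'.card := by rw [hc]; exact hA
    have hS1 : 0 < ∑ g ∈ NS γ, π g := sum_pos (fun g _ => hπ g) ⟨γ', h3⟩
    have hS2 : 0 < ∑ g ∈ NS γ', π g := sum_pos (fun g _ => hπ g) ⟨γ, hSS⟩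
    unfold prnsT
    rw [if_neg h1, if_neg h2, if_pos h3, if_neg h1', if_neg h2', if_pos hSS]
    simp only [mul_zero, zero_mul, mul_one, add_zero, zero_add]
    have key := mh_min (wS γ.card) (wS γ'.card) (∑ g ∈ NS γ, π g) (∑ g ∈ NS γ', π g)
      (π γ * π γ') hA hB hS1 hS2
    calc π γ * (wS γ.card * (π γ' / ∑ g ∈ NS γ, π g) *
          min 1 ((wS γ'.card * ∑ g ∈ NS γ, π g) / (wS γ.card * ∑ g ∈ NS γ', π g)))
        = wS γ.card * ((π γ * π γ') / ∑ g ∈ NS γ, π g) *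
          min 1 ((wS γ'.card * ∑ g ∈ NS γ, π g) / (wS γ.card * ∑ g ∈ NS γ', π g)) := by ring
      _ = wS γ'.card * ((π γ * π γ') / ∑ g ∈ NS γ', π g) *
          min 1 ((wS γ.card * ∑ g ∈ NS γ', π g) / (wS γ'.card * ∑ g ∈ NS γ, π g)) := key
      _ = π γ' * (wS γ'.card * (π γ / ∑ g ∈ NS γ', π g) *
          min 1 ((wS γ.card * ∑ g ∈ NS γ', π g) / (wS γ'.card * ∑ g ∈ NS γ, π g))) := by ring
  · -- no neighbor relation
    have h1' : γ ∉ NA γ' := fun h => h2 (NA_NR h)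
    have h2' : γ ∉ NR γ' := fun h => h1 (NR_NA h)
    have h3' : γ ∉ NS γ' := fun h => h3 (NS_symm h)
    unfold prnsT
    rw [if_neg h1, if_neg h2, if_neg h3, if_neg h1', if_neg h2', if_neg h3']
    simp
end

section
/- Detailed balance for the discrete multiple-try Metropolis sampler with toggled predictor inclusion (Lemma 2, DMTM). For each j ∈ {1,…,p} let ω_j(γ) ∈ [0,1] be a selection probability that depends on γ only through the indicator of j ∈ γ (i.e., ω_j(γ) = a_j if j ∈ γ and ω_j(γ) = b_j if j ∉ γ, for fixed a_j, b_j ∈ [0,1]). Fix an inclusion vector γ, a predictor k, and set γ' = tog(k, γ); assume ω_k(γ) > 0 and ω_k(γ') > 0. Define T(γ, γ') as the sum, over all pairs (η, η') of subsets of {1,…,p} with k ∈ η and k ∈ η', of ω_k(γ)·∏_{j ≠ k} [ω_j(γ)^{1[j∈η]}·(1 − ω_j(γ))^{1[j∉η]}·ω_j(γ')^{1[j∈η']}·(1 − ω_j(γ'))^{1[j∉η']}]·(π(γ') / Σ_{j∈η} π(tog(j, γ)))·min{1, (ω_k(γ')·Σ_{j∈η} π(tog(j, γ))) / (ω_k(γ)·Σ_{j∈η'}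 π(tog(j, γ')))}, and define T(γ', γ) by the same formula with the roles of γ and γ' interchanged. Then π(γ)·T(γ, γ') = π(γ')·T(γ', γ). -/
/-!
Swapping the roles of the forward and backward sets, `(η, η') ↦ (η', η)`, is a bijection
between the index sets of `T(γ, γ')` and `T(γ', γ)` that preserves the selection
probability of the pair. Under it the flow `π γ · T(γ, γ')` of each summand becomes
`π γ π γ' · min (ω_k(γ)/S, ω_k(γ')/S')` with `S, S'` the two normalising sums, which is
symmetric in the two sides.
-/

open Finset

variable {p : ℕ}

/-- `tog k γ` flips the membership of predictor `k` in the inclusion vector `γ`. -/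
def tog (k : Fin p) (γ : Finset (Fin p)) : Finset (Fin p) :=
  if k ∈ γ then γ.erase k else insert k γ

/-- The DMTM transition kernel from `γ` to `γ' = tog k γ`: the sum over all pairs
`(η, η')` of subsets of `{1,…,p}` containing `k` of the selection probability of the
pair, times the probability of proposing `γ'` from the forward set, times the
Metropolis acceptance probability. -/
noncomputable def dmtmT (π : Finset (Fin p) → ℝ)
    (ω : Finset (Fin p) → Fin p → ℝ) (k : Fin p)
    (γ γ' : Finset (Fin p)) : ℝ :=
  ∑ q ∈ (Finset.univ : Finset (Finset (Fin p) × Finset (Fin p))).filter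
      (fun q => k ∈ q.1 ∧ k ∈ q.2),
    ω γ k *
      (∏ j ∈ Finset.univ.erase k,
        ((if j ∈ q.1 then ω γ j else 1 - ω γ j) *
          (if j ∈ q.2 then ω γ' j else 1 - ω γ' j))) *
      (π γ' / ∑ j ∈ q.1, π (tog j γ)) *
      min 1 ((ω γ' k * ∑ j ∈ q.1, π (tog j γ)) /
        (ω γ k * ∑ j ∈ q.2, π (tog j γ')))

section LinearOrderedField

variable {α : Type*} [Field α] [LinearOrder α] [IsStrictOrderedRing α]

theorem mul_min_one_div_eq_min {x : α} (hx : 0 < x) (y : α) : x * min 1 (y / x) = min x y := by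
  rw [mul_min_of_nonneg _ _ hx.le, mul_one, mul_div_cancel₀ y hx.ne']

theorem mul_min_one_div_comm {x y : α} (hx : 0 < x) (hy : 0 < y) :
    x * min 1 (y / x) = y * min 1 (x / y) := by
  rw [mul_min_one_div_eq_min hx, mul_min_one_div_eq_min hy, min_comm]

/-- `wx` and `Sx` are the selection probability of the toggled predictor and the normalising
sum on the side of weight `πx`; `c` is the selection probability of the other predictors. -/
theorem metropolis_flow_symm (πx πy c : α) {wx wy Sx Sy : α}
    (hwx : 0 < wx) (hwy : 0 < wy) (hSx : 0 < Sx) (hSy : 0 < Sy) :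
    πx * (wx * c * (πy / Sx) * min 1 (wy * Sx / (wx * Sy))) =
      πy * (wy * c * (πx / Sy) * min 1 (wx * Sy / (wy * Sx))) := by
  have key := mul_min_one_div_comm (div_pos hwx hSx) (div_pos hwy hSy)
  have hx : wy * Sx / (wx * Sy) = wy / Sy / (wx / Sx) := by field_simp
  have hy : wx * Sy / (wy * Sx) = wx / Sx / (wy / Sy) := by field_simp
  rw [hx, hy]
  calc πx * (wx * c * (πy / Sx) * min 1 (wy / Sy / (wx / Sx)))
      = πx * πy * c * (wx / Sx * min 1 (wy / Sy / (wx / Sx))) := by ring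
    _ = πx * πy * c * (wy / Sy * min 1 (wx / Sx / (wy / Sy))) := by rw [key]
    _ = πy * (wy * c * (πx / Sy) * min 1 (wx / Sx / (wy / Sy))) := by ring

end LinearOrderedField

theorem dmtm_detailed_balance_general
    (π : Finset (Fin p) → ℝ) (hπ : ∀ γ, 0 < π γ)
    (ω : Finset (Fin p) → Fin p → ℝ)
    (γ : Finset (Fin p)) (k : Fin p)
    (γ' : Finset (Fin p))
    (hk1 : 0 < ω γ k) (hk2 : 0 < ω γ' k) :
    π γ * dmtmT π ω k γ γ' = π γ' * dmtmT π ω k γ' γ := by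
  unfold dmtmT
  rw [mul_sum, mul_sum]
  refine sum_nbij' Prod.swap Prod.swap (by simp [and_comm]) (by simp [and_comm])
    (fun _ _ => rfl) (fun _ _ => rfl) ?_
  rintro ⟨η, η'⟩ hq
  obtain ⟨hkη, hkη'⟩ := (mem_filter.1 hq).2
  dsimp only [Prod.swap] at hkη hkη' ⊢
  have hS : 0 < ∑ j ∈ η, π (tog j γ) := sum_pos (fun j _ => hπ _) ⟨k, hkη⟩
  have hS' : 0 < ∑ j ∈ η', π (tog j γ') := sum_pos (fun j _ => hπ _) ⟨k, hkη'⟩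
  rw [prod_congr rfl fun j _ => mul_comm
    (if j ∈ η' then ω γ' j else 1 - ω γ' j) (if j ∈ η then ω γ j else 1 - ω γ j)]
  exact metropolis_flow_symm (π γ) (π γ') _ hk1 hk2 hS hS'

/-- Detailed balance for the discrete multiple-try Metropolis sampler with toggled
predictor inclusion (Lemma 2, DMTM). -/
theorem dmtm_detailed_balance
    (π : Finset (Fin p) → ℝ) (hπ : ∀ γ, 0 < π γ)
    (a b : Fin p → ℝ)
    (ha : ∀ j, a j ∈ Set.Icc (0 : ℝ) 1) (hb : ∀ j, b j ∈ Set.Icc (0 : ℝ) 1)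
    (ω : Finset (Fin p) → Fin p → ℝ)
    (hω : ∀ γ j, ω γ j = if j ∈ γ then a j else b j)
    (γ : Finset (Fin p)) (k : Fin p)
    (γ' : Finset (Fin p)) (hγ' : γ' = tog k γ)
    (hk1 : 0 < ω γ k) (hk2 : 0 < ω γ' k) :
    π γ * dmtmT π ω k γ γ' = π γ' * dmtmT π ω k γ' γ :=
  dmtm_detailed_balance_general π hπ ω γ k γ' hk1 hk2
end

section
/- Detailed balance for the paired Add–Remove moves of the paired-move discrete multiple-try Metropolis sampler (Theorem 1, case m ∈ {A, R}). Let f_1,…,f_p ∈ (0,1] be predictor selection probabilities, and define move-specific selection weights ω^A_j(γ) = f_j if j ∉ γ and 0 if j ∈ γ, and ω^R_j(γ) = 1 if j ∈ γ and 0 if j ∉ γ. Fix an inclusion vector γ, a predictor k ∉ γ, set γ' = γ ∪ {k} = tog(k, γ), and assume w_A(|γ|) > 0 and w_R(|γ'|) > 0. Define S_A(γ → γ') as the sum, over all pairs (η, η') of subsets of {1,…,p} with k ∈ η and k ∈ η', of ω^A_k(γ)·∏_{j ≠ k} [(ω^A_j(γ))^{1[j∈η]}·(1 − ω^A_j(γ))^{1[j∉η]}·(ω^R_j(γ'))^{1[j∈η']}·(1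 − ω^R_j(γ'))^{1[j∉η']}]·(π(γ') / Σ_{j∈η} π(tog(j, γ)))·min{1, (w_R(|γ'|)·ω^R_k(γ')·Σ_{j∈η} π(tog(j, γ))) / (w_A(|γ|)·ω^A_k(γ)·Σ_{j∈η'} π(tog(j, γ')))}, and define S_R(γ' → γ) as the sum, over all pairs (η, η') of subsets of {1,…,p} with k ∈ η and k ∈ η', of ω^R_k(γ')·∏_{j ≠ k} [(ω^R_j(γ'))^{1[j∈η]}·(1 − ω^R_j(γ'))^{1[j∉η]}·(ω^A_j(γ))^{1[j∈η']}·(1 − ω^A_j(γ))^{1[j∉η']}]·(π(γ) / Σ_{j∈η} π(tog(j, γ')))·min{1, (w_A(|γ|)·ω^A_k(γ)·Σ_{j∈η} π(tog(j, γ'))) / (w_R(|γ'|)·ω^R_k(γ')·Σ_{j∈η'} π(tog(j, γ)))}. Then π(γ)·w_A(|γ|)·S_A(γ → γ') = π(γ')·w_R(|γ'|)·S_R(γ' → γ). -/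
open Finset

variable {p : ℕ}

/-- Add-move selection weights: `ω^A_j(γ) = f_j` if `j ∉ γ`, `0` if `j ∈ γ`. -/
def ωAdd (f : Fin p → ℝ) (γ : Finset (Fin p)) (j : Fin p) : ℝ :=
  if j ∈ γ then 0 else f j

/-- Remove-move selection weights: `ω^R_j(γ) = 1` if `j ∈ γ`, `0` if `j ∉ γ`. -/
def ωRem (γ : Finset (Fin p)) (j : Fin p) : ℝ :=
  if j ∈ γ then 1 else 0

/-- The paired-move DMTM transition sum from `γ` to `γ' = tog k γ` with forward
selection weights `ωf` (evaluated at `γ`), reverse selection weights `ωr`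
(evaluated at `γ'`), forward move probability `wf` and reverse move probability
`wr`: the sum over all pairs `(η, η')` of subsets containing `k` of the selection
probability of the pair, the probability of proposing `γ'` from the forward set,
and the Metropolis acceptance probability. -/
noncomputable def pairedMoveSum (π : Finset (Fin p) → ℝ)
    (ωf ωr : Finset (Fin p) → Fin p → ℝ) (wf wr : ℝ)
    (k : Fin p) (γ γ' : Finset (Fin p)) : ℝ :=
  ∑ q ∈ (Finset.univ : Finset (Finset (Fin p) × Finset (Fin p))).filter
      (fun q => k ∈ q.1 ∧ k ∈ q.2),
    ωf γ k *
      (∏ j ∈ Finset.univ.erase k,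
        ((if j ∈ q.1 then ωf γ j else 1 - ωf γ j) *
          (if j ∈ q.2 then ωr γ' j else 1 - ωr γ' j))) *
      (π γ' / ∑ j ∈ q.1, π (tog j γ)) *
      min 1 ((wr * ωr γ' k * ∑ j ∈ q.1, π (tog j γ)) /
        (wf * ωf γ k * ∑ j ∈ q.2, π (tog j γ')))

lemma key_scalar (pγ pγ' wa wr fk P s t : ℝ) (hwa : 0 < wa) (hwr : 0 < wr)
    (hfk : 0 < fk) (hs : 0 < s) (ht : 0 < t) :
    pγ * wa * (fk * P * (pγ' / s) * min 1 (wr * s / (wa * fk * t)))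
      = pγ' * wr * (P * (pγ / t) * min 1 (wa * fk * t / (wr * s))) := by
  rcases le_total (wa * fk * t) (wr * s) with h | h
  · rw [min_eq_left ((one_le_div (by positivity)).mpr h),
      min_eq_right ((div_le_one (by positivity)).mpr h)]
    field_simp
  · rw [min_eq_right ((div_le_one (by positivity)).mpr h),
      min_eq_left ((one_le_div (by positivity)).mpr h)]
    field_simp

/-- Detailed balance for the paired Add–Remove moves of the paired-move discrete
multiple-try Metropolis sampler (Theorem 1, case `m ∈ {A, R}`). Here
`S_A(γ → γ') = pairedMoveSum π (ωAdd f) ωRem (wA |γ|) (wR |γ'|) k γ γ'` and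
`S_R(γ' → γ) = pairedMoveSum π ωRem (ωAdd f) (wR |γ'|) (wA |γ|) k γ' γ`. -/
theorem paired_move_dmtm_add_remove_detailed_balance
    (π : Finset (Fin p) → ℝ) (hπ : ∀ γ, 0 < π γ)
    (f : Fin p → ℝ) (hf : ∀ j, f j ∈ Set.Ioc (0 : ℝ) 1)
    (wA wR wS : ℕ → ℝ)
    (hwA0 : ∀ d, 0 ≤ wA d) (hwR0 : ∀ d, 0 ≤ wR d) (hwS0 : ∀ d, 0 ≤ wS d)
    (γ : Finset (Fin p)) (k : Fin p) (hk : k ∉ γ)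
    (γ' : Finset (Fin p)) (hγ' : γ' = insert k γ)
    (hA : 0 < wA γ.card) (hR : 0 < wR γ'.card) :
    π γ * wA γ.card *
        pairedMoveSum π (ωAdd f) ωRem (wA γ.card) (wR γ'.card) k γ γ'
      = π γ' * wR γ'.card *
        pairedMoveSum π ωRem (ωAdd f) (wR γ'.card) (wA γ.card) k γ' γ := by
  have hkγ' : k ∈ γ' := hγ' ▸ mem_insert_self k γ
  have hfk : 0 < f k := (hf k).1
  unfold pairedMoveSum
  rw [Finset.mul_sum _ _ (π γ * wA γ.card), Finset.mul_sum _ _ (π γ' * wR γ'.card)]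
  refine Finset.sum_bij' (fun q _ => (q.2, q.1)) (fun q _ => (q.2, q.1))
    ?_ ?_ ?_ ?_ ?_
  · intro q hq; simp only [mem_filter, mem_univ, true_and] at hq ⊢; exact hq.symm
  · intro q hq; simp only [mem_filter, mem_univ, true_and] at hq ⊢; exact hq.symm
  · intro q _; rfl
  · intro q _; rfl
  · intro q hq
    simp only [mem_filter, mem_univ, true_and] at hq
    obtain ⟨hq1, hq2⟩ := hq
    have hs : 0 < ∑ j ∈ q.1, π (tog j γ) :=
      Finset.sum_pos (fun j _ => hπ _) ⟨k, hq1⟩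
    have ht : 0 < ∑ j ∈ q.2, π (tog j γ') :=
      Finset.sum_pos (fun j _ => hπ _) ⟨k, hq2⟩
    have hωA : ωAdd f γ k = f k := by simp [ωAdd, hk]
    have hωR : ωRem γ' k = 1 := by simp [ωRem, hkγ']
    have hP : (∏ j ∈ Finset.univ.erase k,
        ((if j ∈ q.2 then ωRem γ' j else 1 - ωRem γ' j) *
          (if j ∈ q.1 then ωAdd f γ j else 1 - ωAdd f γ j)))
      = ∏ j ∈ Finset.univ.erase k,
        ((if j ∈ q.1 then ωAdd f γ j else 1 - ωAdd f γ j) *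
          (if j ∈ q.2 then ωRem γ' j else 1 - ωRem γ' j)) :=
      Finset.prod_congr rfl (fun j _ => mul_comm _ _)
    simp only [hωA, hωR, hP, one_mul, mul_one]
    exact key_scalar (π γ) (π γ') (wA γ.card) (wR γ'.card) (f k) _ _ _
      hA hR hfk hs ht
end

section
/- Detailed balance for the paired Swap moves of the paired-move discrete multiple-try Metropolis sampler (Theorem 1, case m = S). Let f_1,…,f_p ∈ (0,1] be predictor selection probabilities, and define the unified selection weight ω_j(γ) = 1 if j ∈ γ and ω_j(γ) = f_j if j ∉ γ. Fix an inclusion vector γ, predictors r* ∈ γ and a* ∉ γ, and set γ' = (γ \ {r*}) ∪ {a*} (so |γ'| = |γ|); assume w_S(|γ|) > 0. For a vector η ∈ {0,1}^p, let N(δ, η) = {(δ \ {r}) ∪ {a} : r ∈ δ, a ∉ δ, η_r = η_a = 1} denote the swap neighborhood of an inclusion vector δ determined by η. Define S_S(γ → γ') as the sum, over all pairs (η, η') ∈ ({0,1}^p)² with η_{r*} = η_{a*} = η'_{r*} = η'_{a*} = 1, of ω_{r*}(γ)·ω_{a*}(γ)·∏_{j ∉ {r*, a*}} [ω_j(γ)^{η_j}·(1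 − ω_j(γ))^{1−η_j}·ω_j(γ')^{η'_j}·(1 − ω_j(γ'))^{1−η'_j}]·(π(γ') / Σ_{γ̃ ∈ N(γ, η)} π(γ̃))·min{1, (w_S(|γ'|)·ω_{r*}(γ')·ω_{a*}(γ')·Σ_{γ̃∈N(γ,η)} π(γ̃)) / (w_S(|γ|)·ω_{r*}(γ)·ω_{a*}(γ)·Σ_{γ̃∈N(γ',η')} π(γ̃))}, and define S_S(γ' → γ) by the same formula with the roles of γ and γ' interchanged (keeping the forced indices r*, a*). Then π(γ)·w_S(|γ|)·S_S(γ → γ') = π(γ')·w_S(|γ'|)·S_S(γ' → γ). -/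
open Finset

variable {p : ℕ}

/-- Unified Swap-move selection weight: `ω_j(γ) = 1` if `j ∈ γ`, `f_j` if `j ∉ γ`. -/
def ωSwap (f : Fin p → ℝ) (γ : Finset (Fin p)) (j : Fin p) : ℝ :=
  if j ∈ γ then 1 else f j

/-- The swap neighborhood of `δ` determined by `η`:
`N(δ, η) = {(δ \ {r}) ∪ {a} : r ∈ δ, a ∉ δ, η_r = η_a = 1}`,
where a subset `η ⊆ {1,…,p}` encodes a vector `η ∈ {0,1}^p`. -/
def swapNbhd (δ η : Finset (Fin p)) : Finset (Finset (Fin p)) :=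
  ((δ ×ˢ δᶜ).filter (fun ra => ra.1 ∈ η ∧ ra.2 ∈ η)).image
    (fun ra => insert ra.2 (δ.erase ra.1))

/-- The paired Swap-move DMTM transition sum `S_S(γ → γ')` with
`γ' = (γ \ {r}) ∪ {a}`: the sum over all pairs `(η, η')` of subsets with
`r, a ∈ η` and `r, a ∈ η'` of the selection probability of the pair, the
probability of proposing `γ'` from the forward swap neighborhood `N(γ, η)`, and
the Metropolis acceptance probability (with forward move probability `wf` and
reverse move probability `wr`). -/
noncomputable def swapMoveSum (π : Finset (Fin p) → ℝ)
    (ω : Finset (Fin p) → Fin p → ℝ) (wf wr : ℝ)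
    (r a : Fin p) (γ γ' : Finset (Fin p)) : ℝ :=
  ∑ q ∈ (Finset.univ : Finset (Finset (Fin p) × Finset (Fin p))).filter
      (fun q => r ∈ q.1 ∧ a ∈ q.1 ∧ r ∈ q.2 ∧ a ∈ q.2),
    ω γ r * ω γ a *
      (∏ j ∈ Finset.univ \ {r, a},
        ((if j ∈ q.1 then ω γ j else 1 - ω γ j) *
          (if j ∈ q.2 then ω γ' j else 1 - ω γ' j))) *
      (π γ' / ∑ g ∈ swapNbhd γ q.1, π g) *
      min 1 ((wr * ω γ' r * ω γ' a * ∑ g ∈ swapNbhd γ q.1, π g) /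
        (wf * ω γ r * ω γ a * ∑ g ∈ swapNbhd γ' q.2, π g))

/-- Key algebraic identity behind detailed balance:
`(c/S) * min 1 ((w*d*S)/(w*c*T)) = min (c/S) (d/T)` for positive quantities. -/
lemma min_ratio_key (w c d S T : ℝ) (hw : 0 < w) (hc : 0 < c) (hd : 0 < d)
    (hS : 0 < S) (hT : 0 < T) :
    (c / S) * min 1 ((w * d * S) / (w * c * T)) = min (c / S) (d / T) := by
  rw [mul_min_of_nonneg _ _ (by positivity : (0:ℝ) ≤ c / S), mul_one]
  congr 1
  field_simp

/-- Detailed balance for the paired Swap moves of the paired-move discrete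
multiple-try Metropolis sampler (Theorem 1, case `m = S`). Here
`S_S(γ → γ') = swapMoveSum π (ωSwap f) (wS |γ|) (wS |γ'|) r a γ γ'` and
`S_S(γ' → γ)` is the same formula with γ and γ' interchanged. -/
theorem paired_move_dmtm_swap_detailed_balance
    (π : Finset (Fin p) → ℝ) (hπ : ∀ γ, 0 < π γ)
    (f : Fin p → ℝ) (hf : ∀ j, f j ∈ Set.Ioc (0 : ℝ) 1)
    (wA wR wS : ℕ → ℝ)
    (hwA0 : ∀ d, 0 ≤ wA d) (hwR0 : ∀ d, 0 ≤ wR d) (hwS0 : ∀ d, 0 ≤ wS d)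
    (γ : Finset (Fin p)) (r a : Fin p) (hr : r ∈ γ) (ha : a ∉ γ)
    (γ' : Finset (Fin p)) (hγ' : γ' = insert a (γ.erase r))
    (hS : 0 < wS γ.card) :
    π γ * wS γ.card *
        swapMoveSum π (ωSwap f) (wS γ.card) (wS γ'.card) r a γ γ'
      = π γ' * wS γ'.card *
        swapMoveSum π (ωSwap f) (wS γ'.card) (wS γ.card) r a γ' γ := by
  have hra : r ≠ a := fun h => ha (h ▸ hr)
  have hanotin : a ∉ γ.erase r := fun h => ha (Finset.mem_of_mem_erase h)
  have hcard : γ'.card = γ.card := by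
    rw [hγ', Finset.card_insert_of_notMem hanotin, Finset.card_erase_of_mem hr]
    have : 0 < γ.card := Finset.card_pos.mpr ⟨r, hr⟩
    omega
  have haγ' : a ∈ γ' := by rw [hγ']; exact Finset.mem_insert_self _ _
  have hrγ' : r ∉ γ' := by
    rw [hγ']
    simp [Finset.mem_insert, hra, Finset.mem_erase]
  have hωpos : ∀ (δ : Finset (Fin p)) (j : Fin p), 0 < ωSwap f δ j := by
    intro δ j
    unfold ωSwap
    split
    · norm_num
    · exact (hf j).1
  -- ω values at r, a
  have hc1 : 0 < ωSwap f γ r * ωSwap f γ a := mul_pos (hωpos _ _) (hωpos _ _)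
  have hc2 : 0 < ωSwap f γ' r * ωSwap f γ' a := mul_pos (hωpos _ _) (hωpos _ _)
  set w := wS γ.card with hw
  rw [hcard]
  unfold swapMoveSum
  rw [Finset.mul_sum, Finset.mul_sum]
  refine Finset.sum_nbij' (fun q => q.swap) (fun q => q.swap) ?_ ?_ ?_ ?_ ?_
  · intro q hq
    simp only [Finset.mem_filter, Finset.mem_univ, true_and] at hq ⊢
    exact ⟨hq.2.2.1, hq.2.2.2, hq.1, hq.2.1⟩
  · intro q hq
    simp only [Finset.mem_filter, Finset.mem_univ, true_and] at hq ⊢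
    exact ⟨hq.2.2.1, hq.2.2.2, hq.1, hq.2.1⟩
  · intro q _; rfl
  · intro q _; rfl
  · intro q hq
    simp only [Finset.mem_filter, Finset.mem_univ, true_and] at hq
    obtain ⟨hr1, ha1, hr2, ha2⟩ := hq
    simp only [Prod.fst_swap, Prod.snd_swap]
    -- sums over neighborhoods are positive
    have hS1 : 0 < ∑ g ∈ swapNbhd γ q.1, π g := by
      refine Finset.sum_pos (fun g _ => hπ g) ?_
      refine ⟨γ', ?_⟩
      unfold swapNbhd
      rw [Finset.mem_image]
      exact ⟨(r, a), by
        simp only [Finset.mem_filter, Finset.mem_product, Finset.mem_compl]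
        exact ⟨⟨hr, ha⟩, hr1, ha1⟩, hγ'.symm⟩
    have hS2 : 0 < ∑ g ∈ swapNbhd γ' q.2, π g := by
      refine Finset.sum_pos (fun g _ => hπ g) ?_
      refine ⟨γ, ?_⟩
      unfold swapNbhd
      rw [Finset.mem_image]
      refine ⟨(a, r), by
        simp only [Finset.mem_filter, Finset.mem_product, Finset.mem_compl]
        exact ⟨⟨haγ', hrγ'⟩, ha2, hr2⟩, ?_⟩
      rw [hγ', Finset.erase_insert hanotin, Finset.insert_erase hr]
    -- the two products agree
    have hprod : (∏ j ∈ Finset.univ \ {r, a},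
          ((if j ∈ q.1 then ωSwap f γ j else 1 - ωSwap f γ j) *
            (if j ∈ q.2 then ωSwap f γ' j else 1 - ωSwap f γ' j)))
        = (∏ j ∈ Finset.univ \ {r, a},
          ((if j ∈ q.2 then ωSwap f γ' j else 1 - ωSwap f γ' j) *
            (if j ∈ q.1 then ωSwap f γ j else 1 - ωSwap f γ j))) :=
      Finset.prod_congr rfl (fun j _ => mul_comm _ _)
    rw [hprod]
    set P := (∏ j ∈ Finset.univ \ {r, a},
          ((if j ∈ q.2 then ωSwap f γ' j else 1 - ωSwap f γ' j) *
            (if j ∈ q.1 then ωSwap f γ j else 1 - ωSwap f γ j)))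
    set c1 := ωSwap f γ r * ωSwap f γ a with hc1def
    set c2 := ωSwap f γ' r * ωSwap f γ' a with hc2def
    set S1 := ∑ g ∈ swapNbhd γ q.1, π g
    set S2 := ∑ g ∈ swapNbhd γ' q.2, π g
    have key1 : (c1 / S1) * min 1 ((w * c2 * S1) / (w * c1 * S2))
        = min (c1 / S1) (c2 / S2) := min_ratio_key w c1 c2 S1 S2 hS hc1 hc2 hS1 hS2
    have key2 : (c2 / S2) * min 1 ((w * c1 * S2) / (w * c2 * S1))
        = min (c2 / S2) (c1 / S1) := min_ratio_key w c2 c1 S2 S1 hS hc2 hc1 hS2 hS1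
    have e1 : π γ * w * (ωSwap f γ r * ωSwap f γ a * P * (π γ' / S1) *
          min 1 (w * ωSwap f γ' r * ωSwap f γ' a * S1 / (w * (ωSwap f γ r) * ωSwap f γ a * S2)))
        = π γ * π γ' * w * P * ((c1 / S1) * min 1 ((w * c2 * S1) / (w * c1 * S2))) := by
      rw [hc1def, hc2def]; ring_nf
    have e2 : π γ' * w * (ωSwap f γ' r * ωSwap f γ' a * P * (π γ / S2) *
          min 1 (w * ωSwap f γ r * ωSwap f γ a * S2 / (w * (ωSwap f γ' r) * ωSwap f γ' a * S1)))
        = π γ * π γ' * w * P * ((c2 / S2) * min 1 ((w * c1 * S2) / (w * c2 * S1))) := by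
      rw [hc1def, hc2def]; ring_nf
    calc π γ * w * (ωSwap f γ r * ωSwap f γ a * P * (π γ' / S1) *
          min 1 (w * ωSwap f γ' r * ωSwap f γ' a * S1 / (w * ωSwap f γ r * ωSwap f γ a * S2)))
        = π γ * π γ' * w * P * min (c1 / S1) (c2 / S2) := by rw [← key1, ← e1]
      _ = π γ * π γ' * w * P * min (c2 / S2) (c1 / S1) := by rw [min_comm]
      _ = _ := by rw [← key2, ← e2]
end

section
/- Detailed balance for the cross-component donate (CD) inter-component move (case CD of Lemma 3). Let Π be a strictly positive weight function on k-tuples of subsets of {1,…,p}. For a joint configuration 𝛄 = (γ_1,…,γ_k) and a component index v with γ_v ≠ ∅, the cross-donate neighborhood is N_CD(𝛄; v) = {the tuple obtained from 𝛄 by replacing γ_u with γ_u ∪ {j} and γ_v with γ_v \ {j}, for some u ≠ v and j ∈ γ_v with j ∉ γ_u}. Suppose 𝛄' is obtained from 𝛄 by donating a predictor j from component v to component u (so j ∈ γ_v and j ∉ γ_u), and suppose the set of indices of non-empty components of 𝛄' equals that of 𝛄 (e.g., |γ_v| ≥ 2 and γ_u ≠ ∅); let k_ne denote its cardinality, assumed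 ≥ 1. Then Π(𝛄)·(1/k_ne)·(Π(𝛄') / Σ_{𝛄̃ ∈ N_CD(𝛄; v)} Π(𝛄̃))·min{1, Σ_{𝛄̃∈N_CD(𝛄;v)} Π(𝛄̃) / Σ_{𝛄̃∈N_CD(𝛄';u)} Π(𝛄̃)} = Π(𝛄')·(1/k_ne)·(Π(𝛄) / Σ_{𝛄̃∈N_CD(𝛄';u)} Π(𝛄̃))·min{1, Σ_{𝛄̃∈N_CD(𝛄';u)} Π(𝛄̃) / Σ_{𝛄̃∈N_CD(𝛄;v)} Π(𝛄̃)}. -/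
open Finset

/-- `donate γ dnr recv j` : the joint configuration obtained from `γ` by moving
predictor `j` from component `dnr` (the donor) to component `recv` (the receiver). -/
def donate {p k : ℕ} (γ : Fin k → Finset (Fin p)) (dnr recv : Fin k) (j : Fin p) :
    Fin k → Finset (Fin p) :=
  Function.update (Function.update γ recv (insert j (γ recv))) dnr ((γ dnr).erase j)

/-- The cross-component donate neighborhood `N_CD(γ; v)`: all configurations obtained
from `γ` by donating some predictor `j ∈ γ_v` to some other component `u ≠ v` with
`j ∉ γ_u`. -/
def NCD {p k : ℕ} (γ : Fin k → Finset (Fin p)) (v : Fin k) :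
    Finset (Fin k → Finset (Fin p)) :=
  (((Finset.univ.erase v) ×ˢ γ v).filter (fun uj => uj.2 ∉ γ uj.1)).image
    (fun uj => donate γ v uj.1 uj.2)

/-- Detailed balance for the cross-component donate (CD) inter-component move
(case CD of Lemma 3). -/
theorem cd_detailed_balance {p k : ℕ} (hp : 1 ≤ p) (hk : 2 ≤ k)
    (Ppi : (Fin k → Finset (Fin p)) → ℝ) (hPpi : ∀ γ, 0 < Ppi γ)
    (γ : Fin k → Finset (Fin p)) (u v : Fin k) (huv : u ≠ v)
    (j : Fin p) (hjv : j ∈ γ v) (hju : j ∉ γ u)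
    (γ' : Fin k → Finset (Fin p)) (hγ' : γ' = donate γ v u j)
    (hne : Finset.univ.filter (fun l => γ' l ≠ ∅) =
      Finset.univ.filter (fun l => γ l ≠ ∅))
    (kne : ℕ) (hkne : kne = (Finset.univ.filter (fun l => γ l ≠ ∅)).card)
    (hkne1 : 1 ≤ kne) :
    Ppi γ * ((1 : ℝ) / kne) * (Ppi γ' / ∑ g ∈ NCD γ v, Ppi g) *
        min 1 ((∑ g ∈ NCD γ v, Ppi g) / (∑ g ∈ NCD γ' u, Ppi g))
      = Ppi γ' * ((1 : ℝ) / kne) * (Ppi γ / ∑ g ∈ NCD γ' u, Ppi g) *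
        min 1 ((∑ g ∈ NCD γ' u, Ppi g) / (∑ g ∈ NCD γ v, Ppi g)) := by

  have hS : 0 < ∑ g ∈ NCD γ v, Ppi g := by
    apply Finset.sum_pos (fun g _ => hPpi g)
    refine ⟨donate γ v u j, ?_⟩
    simp only [NCD, Finset.mem_image]
    exact ⟨(u, j), by simp [Finset.mem_filter, Finset.mem_erase, huv, hjv, hju], rfl⟩
  have hju' : j ∈ γ' u := by
    simp [hγ', donate, Function.update_apply, huv, Ne.symm huv]
  have hjv' : j ∉ γ' v := by
    simp [hγ', donate, Function.update_apply]
  have hT : 0 < ∑ g ∈ NCD γ' u, Ppi g := by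
    apply Finset.sum_pos (fun g _ => hPpi g)
    refine ⟨donate γ' u v j, ?_⟩
    simp only [NCD, Finset.mem_image]
    exact ⟨(v, j), by simp [Finset.mem_filter, Finset.mem_erase, Ne.symm huv, hju', hjv'], rfl⟩
  set S := ∑ g ∈ NCD γ v, Ppi g
  set T := ∑ g ∈ NCD γ' u, Ppi g
  rcases le_total S T with h | h
  · rw [min_eq_right (by rw [div_le_one hT]; exact h),
      min_eq_left (by rw [le_div_iff₀ hS]; simpa using h)]
    field_simp
  · rw [min_eq_left (by rw [le_div_iff₀ hT]; simpa using h),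
      min_eq_right (by rw [div_le_one hS]; exact h)]
    field_simp
end
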